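/- Let ū₂, ū₄, ũ₄ be real numbers with 1 + ū₂ ≠ 0 and 48·ū₂ + 2 ≠ 0. Define ũ₆₁ = (144/π)·ũ₄²·ū₄/(1 + ū₂)³ and ũ₆₂ = (48/π)·ũ₄³/(1 + ū₂)³. If 2·ū₂ + (2/π)·ū₄/(1 + ū₂)² + (1/π)·ũ₄/(1 + ū₂)² = 0 and 4·ũ₄ + (4/(3π))·ũ₆₁/(1 + ū₂)² + (2/π)·ũ₆₂/(1 + ū₂)² − (8/π)·ũ₄²/(1 + ū₂)³ = 0, then ũ₄ = 0 or ũ₄ = π·(1 + ū₂)³/(48·ū₂ + 2). -/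

import Mathlib

open Real

/-!
Clearing denominators, the fixed-point condition for `ū₂` fixes `2ū₄ = -2πū₂(1+ū₂)² - ũ₄`,
and the one for `ũ₄` becomes a cubic in `ũ₄`. Substituting the former into the latter, the
cubic terms coming from `ũ₆₁` and `ũ₆₂` cancel, and what is left factors as
`π(1+ū₂)² · ũ₄ · (π(1+ū₂)³ - (48ū₂+2)ũ₄) = 0`.
-/

namespace EVE

variable {u₂ u₄ tu₄ : ℝ}

theorem two_mul_u₄_of_mass_flow_eq_zero (h₂ : 1 + u₂ ≠ 0)
    (hflow2 : 2 * u₂ + (2 / π) * u₄ / (1 + u₂) ^ 2 + (1 / π) * tu₄ / (1 + u₂) ^ 2 = 0) :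
    2 * u₄ = -(2 * π * u₂ * (1 + u₂) ^ 2) - tu₄ := by
  field_simp at hflow2
  linear_combination hflow2

theorem cubic_of_disorder_flow_eq_zero (h₂ : 1 + u₂ ≠ 0)
    (hflow4 : 4 * tu₄ + (4 / (3 * π)) * ((144 / π) * tu₄ ^ 2 * u₄ / (1 + u₂) ^ 3) / (1 + u₂) ^ 2
        + (2 / π) * ((48 / π) * tu₄ ^ 3 / (1 + u₂) ^ 3) / (1 + u₂) ^ 2
        - (8 / π) * tu₄ ^ 2 / (1 + u₂) ^ 3 = 0) :
    π ^ 2 * (1 + u₂) ^ 5 * tu₄ + 24 * tu₄ ^ 2 * (2 * u₄) + 24 * tu₄ ^ 3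
      - 2 * π * (1 + u₂) ^ 2 * tu₄ ^ 2 = 0 := by
  have hπ : π ≠ 0 := pi_ne_zero
  field_simp at hflow4
  have hne : (12 : ℝ) * π ^ 3 * (1 + u₂) ^ 8 ≠ 0 := by positivity
  apply mul_left_cancel₀ hne
  linear_combination π ^ 3 * (1 + u₂) ^ 8 * hflow4

end EVE

theorem eve_quartic_branches (u₂ u₄ tu₄ : ℝ)
    (h₂ : 1 + u₂ ≠ 0) (h48 : 48 * u₂ + 2 ≠ 0)
    (tu₆₁ tu₆₂ : ℝ)
    (h61 : tu₆₁ = (144 / π) * tu₄ ^ 2 * u₄ / (1 + u₂) ^ 3)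
    (h62 : tu₆₂ = (48 / π) * tu₄ ^ 3 / (1 + u₂) ^ 3)
    (hflow2 : 2 * u₂ + (2 / π) * u₄ / (1 + u₂) ^ 2 + (1 / π) * tu₄ / (1 + u₂) ^ 2 = 0)
    (hflow4 : 4 * tu₄ + (4 / (3 * π)) * tu₆₁ / (1 + u₂) ^ 2
        + (2 / π) * tu₆₂ / (1 + u₂) ^ 2 - (8 / π) * tu₄ ^ 2 / (1 + u₂) ^ 3 = 0) :
    tu₄ = 0 ∨ tu₄ = π * (1 + u₂) ^ 3 / (48 * u₂ + 2) := by
  subst h61 h62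
  have hu₄ := EVE.two_mul_u₄_of_mass_flow_eq_zero h₂ hflow2
  have hcubic := EVE.cubic_of_disorder_flow_eq_zero h₂ hflow4
  rw [hu₄] at hcubic
  have hfactor : π * (1 + u₂) ^ 2 * (tu₄ * (π * (1 + u₂) ^ 3 - (48 * u₂ + 2) * tu₄)) = 0 := by
    linear_combination hcubic
  have hprefactor : π * (1 + u₂) ^ 2 ≠ 0 := mul_ne_zero pi_ne_zero (pow_ne_zero 2 h₂)
  rcases mul_eq_zero.mp ((mul_eq_zero.mp hfactor).resolve_left hprefactor) with h | h
  · exact Or.inl h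
  · exact Or.inr (eq_div_of_mul_eq h48 (by linear_combination -h))
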